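/- arXiv:1304.5278 — 5 statements merged into one kernel-verified Lean document; each statement's English description precedes it below -/
import Mathlib

section
/- Modal refinement is transitive and implies thorough refinement: for states s₀ and t₀ of parametric modal transition systems, if s₀ ≤ₘ t₀ (modal refinement), then every implementation i with i ≤ₘ s₀ also satisfies i ≤ₘ t₀; hence ⟦s₀⟧ ⊆ ⟦t₀⟧, i.e., s₀ ≤ₜ t₀. -/
/-- Boolean formulae over a set of atomic propositions `X`. -/
inductive BForm (X : Type) : Type where
  | tt : BForm X
  | var : X → BForm X
  | neg : BForm X → BForm X
  | and : BForm X → BForm X → BForm X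
  | or : BForm X → BForm X → BForm X

/-- Satisfaction of a Boolean formula under a valuation (set of true atoms). -/
def BForm.sat {X : Type} (ν : Set X) : BForm X → Prop
  | .tt => True
  | .var x => x ∈ ν
  | .neg φ => ¬ BForm.sat ν φ
  | .and φ ψ => BForm.sat ν φ ∧ BForm.sat ν ψ
  | .or φ ψ => BForm.sat ν φ ∨ BForm.sat ν ψ

/-- Substitute a formula for each atom. -/
def BForm.map {X Y : Type} (f : X → BForm Y) : BForm X → BForm Y
  | .tt => .tt
  | .var x => f x
  | .neg φ => .neg (BForm.map f φ)
  | .and φ ψ => .and (BForm.map f φ) (BForm.map f ψ)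
  | .or φ ψ => .or (BForm.map f φ) (BForm.map f ψ)

def BForm.xor {X : Type} (φ ψ : BForm X) : BForm X :=
  .or (.and φ (.neg ψ)) (.and (.neg φ) ψ)

def BForm.iff {X : Type} (φ ψ : BForm X) : BForm X :=
  .and (.or (.neg φ) ψ) (.or φ (.neg ψ))

/-- A parametric modal transition system over alphabet `A`, states `S`, parameters `P`. -/
structure PMTS (A S P : Type) : Type where
  T : Set (S × A × S)
  Φ : S → BForm ((A × S) ⊕ P)

/-- A Boolean modal transition system is a PMTS with an empty parameter set. -/
abbrev BMTS (A S : Type) := PMTS A S Empty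

/-- `T(s)`: the outgoing transitions of `s`. -/
def PMTS.Tsucc {A S P : Type} (M : PMTS A S P) (s : S) : Set (A × S) :=
  {p | (s, p.1, p.2) ∈ M.T}

/-- `Tran_ν(s)`: admissible sets of outgoing transitions under parameter valuation `ν`. -/
def PMTS.Tran {A S P : Type} (M : PMTS A S P) (ν : Set P) (s : S) : Set (Set (A × S)) :=
  {E | E ⊆ M.Tsucc s ∧ BForm.sat (Sum.inl '' E ∪ Sum.inr '' ν) (M.Φ s)}

open Classical in
/-- Substitution of truth values for parameters according to a valuation `ν`. -/
noncomputable def paramSubst {X P : Type} (ν : Set P) : X ⊕ P → BForm (X ⊕ Empty)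
  | Sum.inl x => .var (Sum.inl x)
  | Sum.inr p => if p ∈ ν then .tt else .neg .tt

/-- The BMTS `M^ν` induced by a parameter valuation `ν`. -/
noncomputable def PMTS.toBMTS {A S P : Type} (M : PMTS A S P) (ν : Set P) : BMTS A S where
  T := M.T
  Φ := fun s => (M.Φ s).map (paramSubst ν)

/-- The modal-refinement condition on a relation `R`, w.r.t. valuations `μ` and `ν`. -/
def RefCond {A S1 S2 P1 P2 : Type} (M1 : PMTS A S1 P1) (M2 : PMTS A S2 P2)
    (μ : Set P1) (ν : Set P2) (R : Set (S1 × S2)) : Prop :=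
  ∀ p ∈ R, ∀ Ms ∈ M1.Tran μ p.1, ∃ N ∈ M2.Tran ν p.2,
    (∀ q ∈ Ms, ∃ t' : S2, (q.1, t') ∈ N ∧ (q.2, t') ∈ R) ∧
    (∀ q ∈ N, ∃ s' : S1, (q.1, s') ∈ Ms ∧ (s', q.2) ∈ R)

/-- `R` is a modal refinement relation between two BMTS. -/
def IsRefRel {A S1 S2 : Type} (M1 : BMTS A S1) (M2 : BMTS A S2) (R : Set (S1 × S2)) : Prop :=
  RefCond M1 M2 ∅ ∅ R

/-- Modal refinement on BMTS. -/
def BRefines {A S1 S2 : Type} (M1 : BMTS A S1) (M2 : BMTS A S2) (s : S1) (t : S2) : Prop :=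
  ∃ R : Set (S1 × S2), (s, t) ∈ R ∧ IsRefRel M1 M2 R

/-- Modal refinement on PMTS (valuation-wise definition). -/
def PRefines {A S1 S2 P1 P2 : Type} (M1 : PMTS A S1 P1) (M2 : PMTS A S2 P2)
    (s : S1) (t : S2) : Prop :=
  ∀ μ : Set P1, ∃ ν : Set P2, BRefines (M1.toBMTS μ) (M2.toBMTS ν) s t

/-- An implementation: every state's only admissible transition set is its full set of
transitions (i.e. `Φ(s)` is the conjunction of all outgoing transitions). -/
def PMTS.IsImplementation {A S : Type} (M : BMTS A S) : Prop :=
  ∀ s : S, M.Tran ∅ s = {M.Tsucc s}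

/-- Thorough refinement: inclusion of sets of implementations. -/
def ThoroughRefines {A S1 S2 P1 P2 : Type} (M1 : PMTS A S1 P1) (M2 : PMTS A S2 P2)
    (s : S1) (t : S2) : Prop :=
  ∀ (SI : Type) (I : BMTS A SI) (i : SI), I.IsImplementation →
    PRefines I M1 i s → PRefines I M2 i t

/-- A PMTS is deterministic if no state has two distinct successors under the same action. -/
def PMTS.Deterministic {A S P : Type} (M : PMTS A S P) : Prop :=
  ∀ s a t t', (s, a, t) ∈ M.T → (s, a, t') ∈ M.T → t = t'

/-- Global (semantic) consistency: every state has an implementation. -/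
def PMTS.SemConsistent {A S : Type} (M : BMTS A S) : Prop :=
  ∀ s : S, ∃ (SI : Type) (I : BMTS A SI) (i : SI), I.IsImplementation ∧ BRefines I M i s

/-- Parameter substitution used in the de-parameterization, also retagging states
with the valuation. -/
def deParamSubst {A S P : Type} [DecidableEq P] (ν : Finset P) :
    (A × S) ⊕ P → BForm ((A × Option (S × Finset P)) ⊕ Empty)
  | Sum.inl q => .var (Sum.inl (q.1, some (q.2, ν)))
  | Sum.inr p => if p ∈ ν then .tt else .neg .tt

/-- The de-parameterization `M^B` of a PMTS `M` with initial state `s0`.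
The state `none` plays the rôle of `s0^B`. -/
noncomputable def PMTS.deParam {A S P : Type} [Fintype P] [DecidableEq P] (M : PMTS A S P) (s0 : S) :
    BMTS A (Option (S × Finset P)) where
  T := {x | (∃ a s ν, x = (none, a, some (s, ν)) ∧ (s0, a, s) ∈ M.T) ∨
            (∃ s a s' ν, x = (some (s, ν), a, some (s', ν)) ∧ (s, a, s') ∈ M.T)}
  Φ := fun st => match st with
    | none => (Finset.univ : Finset (Finset P)).toList.foldr
        (fun ν acc => BForm.xor ((M.Φ s0).map (deParamSubst ν)) acc) (.neg .tt)
    | some (s, ν) => (M.Φ s).map (deParamSubst ν)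

/-- The set of `a`-successors of a set of states. -/
def PMTS.succSet {A S P : Type} (M : PMTS A S P) (X : Set S) (a : A) : Set S :=
  {s' | ∃ s ∈ X, (s, a, s') ∈ M.T}

/-- The deterministic hull `𝒟(M)` of a PMTS (powerset construction). -/
noncomputable def PMTS.detHull {A S P : Type} [Fintype S] (M : PMTS A S P) :
    PMTS A (Set S) P where
  T := {x | x.2.2 = M.succSet x.1 x.2.1}
  Φ := fun X => ((Set.toFinite X).toFinset).toList.foldr
    (fun s acc => .or ((M.Φ s).map (fun y => match y with
      | Sum.inl q => .var (Sum.inl (q.1, M.succSet X q.1))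
      | Sum.inr p => .var (Sum.inr p))) acc) (.neg .tt)

open Classical in
/-- The parameter-free hull `𝒫(M)` of a PMTS. -/
noncomputable def PMTS.pfHull {A S P : Type} [Fintype P] [DecidableEq P] (M : PMTS A S P) :
    BMTS A S where
  T := M.T
  Φ := fun s => (Finset.univ : Finset (Finset P)).toList.foldr
    (fun ν acc => .or ((M.Φ s).map (paramSubst (↑ν : Set P))) acc) (.neg .tt)

open Classical in
/-- Removing a state `s` (and all transitions involving it) from a BMTS. -/
noncomputable def PMTS.removeState {A S : Type} (M : BMTS A S) (s : S) :
    BMTS A {t : S // t ≠ s} where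
  T := {x | (x.1.1, x.2.1, x.2.2.1) ∈ M.T}
  Φ := fun t => (M.Φ t.1).map (fun y => match y with
    | Sum.inl q => if h : q.2 = s then .neg .tt else .var (Sum.inl (q.1, ⟨q.2, h⟩))
    | Sum.inr e => Empty.elim e)

/-- The PMTS witnessing the unavoidable exponential blowup of de-parameterization:
actions are the parameters, and both steps must take exactly the transitions whose
parameter is true. -/
noncomputable def blowupPMTS (P : Type) [Fintype P] [DecidableEq P] : PMTS P (Fin 3) P where
  T := {x | ∃ p : P, x = (0, p, 1) ∨ x = (1, p, 2)}
  Φ := fun s =>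
    if s = 0 then
      (Finset.univ : Finset P).toList.foldr
        (fun p acc => .and (BForm.iff (.var (Sum.inl (p, (1 : Fin 3)))) (.var (Sum.inr p))) acc) .tt
    else if s = 1 then
      (Finset.univ : Finset P).toList.foldr
        (fun p acc => .and (BForm.iff (.var (Sum.inl (p, (2 : Fin 3)))) (.var (Sum.inr p))) acc) .tt
    else .tt

/-- A classical modal transition system. -/
structure MTS (A S : Type) where
  may : Set (S × A × S)
  must : Set (S × A × S)
  must_sub : must ⊆ may

/-- Classical MTS modal refinement. -/
def MTSRefines {A S1 S2 : Type} (N1 : MTS A S1) (N2 : MTS A S2) (s0 : S1) (t0 : S2) : Prop :=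
  ∃ R : Set (S1 × S2), (s0, t0) ∈ R ∧ ∀ p ∈ R,
    (∀ a s', (p.1, a, s') ∈ N1.may → ∃ t', (p.2, a, t') ∈ N2.may ∧ (s', t') ∈ R) ∧
    (∀ a t', (p.2, a, t') ∈ N2.must → ∃ s', (p.1, a, s') ∈ N1.must ∧ (s', t') ∈ R)

/-- A BMTS corresponds to an MTS when its transitions are the may-transitions and the
admissible transition sets are exactly those between the must- and may-successors
(i.e. `Φ(s)` is the conjunction of the must-transitions of `s`). -/
def Corresponds {A S : Type} (N : MTS A S) (M : BMTS A S) : Prop :=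
  M.T = N.may ∧
  ∀ s, M.Tran ∅ s = {E | {q : A × S | (s, q.1, q.2) ∈ N.must} ⊆ E ∧ E ⊆ M.Tsucc s}

/-- The `Avoid` set: the least set of pairs `(s, 𝒯)` closed under the rules of the
thorough-refinement algorithm for BMTS. -/
inductive Avoid {A S : Type} (M : BMTS A S) : S → Set S → Prop
  | empty (s : S) : Avoid M s ∅
  | step (s : S) (𝒯 : Set S) (Ms : Set (A × S)) (later : A → S → Set (A × S) → Set S)
      (hM : Ms ∈ M.Tran ∅ s)
      (h1 : ∀ t ∈ 𝒯, ∀ Nt ∈ M.Tran ∅ t, ∃ a : A,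
        (∃ ta, (a, ta) ∈ Nt ∧ ∀ sa, (a, sa) ∈ Ms →
          ∀ f, (∃ t' ∈ 𝒯, f ∈ M.Tran ∅ t') → ta ∈ later a sa f) ∨
        (∃ sa, (a, sa) ∈ Ms ∧ ∀ ta, (a, ta) ∈ Nt → ta ∈ later a sa Nt))
      (h2 : ∀ f, (∃ t' ∈ 𝒯, f ∈ M.Tran ∅ t') →
        ∀ a sa, (a, sa) ∈ Ms → Avoid M sa (later a sa f)) :
      Avoid M s 𝒯

/-- The decreasing sequence `Rⁿ_{μ,ν}` of bounded modal refinement relations. -/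
def BoundedRel {A S1 S2 P1 P2 : Type} (M1 : PMTS A S1 P1) (M2 : PMTS A S2 P2)
    (μ : Set P1) (ν : Set P2) : ℕ → Set (S1 × S2)
  | 0 => Set.univ
  | n + 1 => {p | ∀ Ms ∈ M1.Tran μ p.1, ∃ N ∈ M2.Tran ν p.2,
      (∀ q ∈ Ms, ∃ t' : S2, (q.1, t') ∈ N ∧ (q.2, t') ∈ BoundedRel M1 M2 μ ν n) ∧
      (∀ q ∈ N, ∃ s' : S1, (q.1, s') ∈ Ms ∧ (s', q.2) ∈ BoundedRel M1 M2 μ ν n)}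

/-- The de-negation DMTS `M^D` of a BMTS: its states are the admissible transition sets. -/
noncomputable def PMTS.deNeg {A S : Type} [Fintype A] [Fintype S] (M : BMTS A S) :
    BMTS A (Set (A × S)) where
  T := {x | ∃ s' : S, (x.2.1, s') ∈ x.1 ∧ x.2.2 ∈ M.Tran ∅ s'}
  Φ := fun E => ((Set.toFinite E).toFinset).toList.foldr
    (fun q acc => .and
      (((Set.toFinite (M.Tran ∅ q.2)).toFinset).toList.foldr
        (fun M' acc2 => .or (.var (Sum.inl (q.1, M'))) acc2) (.neg .tt)) acc) .tt

section

open SetRel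

theorem RefCond.comp {A S1 S2 S3 P1 P2 P3 : Type} {M1 : PMTS A S1 P1} {M2 : PMTS A S2 P2}
    {M3 : PMTS A S3 P3} {μ : Set P1} {ν : Set P2} {ξ : Set P3}
    {R : SetRel S1 S2} {R' : SetRel S2 S3}
    (hR : RefCond M1 M2 μ ν R) (hR' : RefCond M2 M3 ν ξ R') :
    RefCond M1 M3 μ ξ (R ○ R') := by
  rintro ⟨s, u⟩ ⟨t, hst, htu⟩ Ms hMs
  obtain ⟨N, hN, forth, back⟩ := hR (s, t) hst Ms hMs
  obtain ⟨N', hN', forth', back'⟩ := hR' (t, u) htu N hN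
  refine ⟨N', hN', ?_, ?_⟩
  · rintro ⟨a, s'⟩ hs'
    obtain ⟨t', ht', hs't'⟩ := forth _ hs'
    obtain ⟨u', hu', ht'u'⟩ := forth' (a, t') ht'
    exact ⟨u', hu', prodMk_mem_comp hs't' ht'u'⟩
  · rintro ⟨a, u'⟩ hu'
    obtain ⟨t', ht', ht'u'⟩ := back' _ hu'
    obtain ⟨s', hs', hs't'⟩ := back (a, t') ht'
    exact ⟨s', hs', prodMk_mem_comp hs't' ht'u'⟩

theorem BRefines.trans {A S1 S2 S3 : Type} {M1 : BMTS A S1} {M2 : BMTS A S2}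
    {M3 : BMTS A S3} {s : S1} {t : S2} {u : S3}
    (hst : BRefines M1 M2 s t) (htu : BRefines M2 M3 t u) : BRefines M1 M3 s u :=
  let ⟨R, hsR, hR⟩ := hst
  let ⟨R', htR', hR'⟩ := htu
  ⟨R ○ R', prodMk_mem_comp hsR htR', hR.comp hR'⟩

theorem PRefines.trans {A S1 S2 S3 P1 P2 P3 : Type} {M1 : PMTS A S1 P1} {M2 : PMTS A S2 P2}
    {M3 : PMTS A S3 P3} {s : S1} {t : S2} {u : S3}
    (hst : PRefines M1 M2 s t) (htu : PRefines M2 M3 t u) : PRefines M1 M3 s u := fun μ =>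
  let ⟨ν, hμν⟩ := hst μ
  let ⟨ξ, hνξ⟩ := htu ν
  ⟨ξ, hμν.trans hνξ⟩

end

theorem modal_refinement_implies_thorough
    {A S1 S2 P1 P2 : Type} (M1 : PMTS A S1 P1) (M2 : PMTS A S2 P2)
    (s0 : S1) (t0 : S2) (h : PRefines M1 M2 s0 t0) :
    (∀ (SI : Type) (I : BMTS A SI) (i : SI), I.IsImplementation →
      PRefines I M1 i s0 → PRefines I M2 i t0) ∧
    ThoroughRefines M1 M2 s0 t0 := by
  have implementations_transfer : ∀ (SI : Type) (I : BMTS A SI) (i : SI), I.IsImplementation →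
      PRefines I M1 i s0 → PRefines I M2 i t0 :=
    fun _ _ _ _ hi => hi.trans h
  exact ⟨implementations_transfer, implementations_transfer⟩
end

section
/- There exist states s₀ of a PMTS and t₀ of another PMTS such that s₀ modally refines t₀ in the valuation-wise sense (for every valuation μ of the left parameters there is a valuation ν of the right parameters with s₀^μ ≤ₘ t₀^ν), but there is no single fixed relation R witnessing refinement simultaneously for all valuations; hence the two definitions of PMTS modal refinement differ. A witnessing example: left system with parameter p, states s₀→s₁→s₂ under a, Φ(s₀)=(a,s₁), Φ(s₁)=((a,s₂)⇔p), Φ(s₂)=tt; right system with parameter q, transitions t₀→t₁→t₂ and t₀→t₁' under a, Φ(t₀)=((a,t₁)⇔q)∧((a,t₁')⇔¬q), Φ(t₁)=(a,t₂), Φ(t₂)=Φ(t₁')=tt. -/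
/-! Under `p` the left system must move `s₁ → s₂`, and is matched by `t₀ → t₁ → t₂` with `q`
true; under `¬p` it must stop at `s₁`, and is matched by `t₀ → t₁'` with `q` false. A single
relation has to relate `s₁` to `t₁` or to `t₁'`: the pair `(s₁, t₁')` fails when `p` holds, as
`t₁'` cannot answer `s₁ → s₂`, and `(s₁, t₁)` fails when `p` fails, as `t₁` must move while `s₁`
may not. -/

theorem BForm.sat_map {X Y : Type} (f : X → BForm Y) (V : Set Y) (φ : BForm X) :
    (φ.map f).sat V ↔ φ.sat {x | (f x).sat V} := by
  induction φ <;> simp [BForm.map, BForm.sat, *]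

namespace PMTS

variable {A S P : Type}

theorem tran_toBMTS (M : PMTS A S P) (μ : Set P) (s : S) :
    (M.toBMTS μ).Tran ∅ s = M.Tran μ s := by
  have hval (E : Set (A × S)) :
      {y | (paramSubst μ y).sat (Sum.inl '' E ∪ Sum.inr '' (∅ : Set Empty))} =
        Sum.inl '' E ∪ Sum.inr '' μ := by
    ext (x | p)
    · simp [paramSubst, BForm.sat]
    · by_cases h : p ∈ μ <;> simp [paramSubst, h, BForm.sat]
  ext E
  simp only [PMTS.Tran, PMTS.toBMTS, PMTS.Tsucc, Set.mem_ofPred_eq, BForm.sat_map, hval]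

end PMTS

section Refinement

variable {A S1 S2 P1 P2 : Type} {M1 : PMTS A S1 P1} {M2 : PMTS A S2 P2}

theorem isRefRel_toBMTS_iff {μ : Set P1} {ν : Set P2} {R : Set (S1 × S2)} :
    IsRefRel (M1.toBMTS μ) (M2.toBMTS ν) R ↔ RefCond M1 M2 μ ν R := by
  simp only [IsRefRel, RefCond, PMTS.tran_toBMTS]

theorem pRefines_iff {s : S1} {t : S2} :
    PRefines M1 M2 s t ↔ ∀ μ, ∃ ν, ∃ R, (s, t) ∈ R ∧ RefCond M1 M2 μ ν R := by
  simp only [PRefines, BRefines, isRefRel_toBMTS_iff]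

theorem refCond_graph {μ : Set P1} {ν : Set P2} (f : S1 → S2)
    (h : ∀ s, ∀ E ∈ M1.Tran μ s, Prod.map id f '' E ∈ M2.Tran ν (f s)) :
    RefCond M1 M2 μ ν {p | p.2 = f p.1} := by
  rintro ⟨s, _⟩ (rfl : _ = f s) E hE
  refine ⟨_, h s E hE, fun q hq => ⟨f q.2, ⟨q, hq, rfl⟩, rfl⟩, ?_⟩
  rintro _ ⟨q, hq, rfl⟩
  exact ⟨q.2, hq, rfl⟩

namespace RefCond

variable {μ : Set P1} {ν : Set P2} {R : Set (S1 × S2)} {s : S1} {t : S2}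

theorem exists_tsucc (hR : RefCond M1 M2 μ ν R) (hst : (s, t) ∈ R) {E : Set (A × S1)}
    (hE : E ∈ M1.Tran μ s) {q : A × S1} (hq : q ∈ E) :
    ∃ t', (q.1, t') ∈ M2.Tsucc t ∧ (q.2, t') ∈ R := by
  obtain ⟨N, hN, hfwd, -⟩ := hR _ hst E hE
  obtain ⟨t', ht'N, ht'R⟩ := hfwd q hq
  exact ⟨t', hN.1 ht'N, ht'R⟩

theorem empty_mem_tran (hR : RefCond M1 M2 μ ν R) (hst : (s, t) ∈ R)
    (hE : ∅ ∈ M1.Tran μ s) : ∅ ∈ M2.Tran ν t := by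
  obtain ⟨N, hN, -, hbwd⟩ := hR _ hst ∅ hE
  convert hN
  refine (Set.eq_empty_of_forall_notMem fun q hq => ?_).symm
  obtain ⟨_, h, -⟩ := hbwd q hq
  exact h

end RefCond

end Refinement

inductive LeftState | s₀ | s₁ | s₂

inductive RightState | t₀ | t₁ | t₁' | t₂

open LeftState RightState

/- The parameters `p` and `q` of the example are both `() : Unit`, and the only action is `()`. -/
def leftPMTS : PMTS Unit LeftState Unit where
  T := {(s₀, (), s₁), (s₁, (), s₂)}
  Φ
    | s₀ => .var (.inl ((), s₁))
    | s₁ => BForm.iff (.var (.inl ((), s₂))) (.var (.inr ()))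
    | s₂ => .tt

def rightPMTS : PMTS Unit RightState Unit where
  T := {(t₀, (), t₁), (t₀, (), t₁'), (t₁, (), t₂)}
  Φ
    | t₀ => .and (BForm.iff (.var (.inl ((), t₁))) (.var (.inr ())))
        (BForm.iff (.var (.inl ((), t₁'))) (.neg (.var (.inr ()))))
    | t₁ => .var (.inl ((), t₂))
    | t₁' | t₂ => .tt

theorem leftPMTS_tsucc_s₀ : leftPMTS.Tsucc s₀ = {((), s₁)} := by
  ext ⟨⟨⟩, s⟩; cases s <;> simp [PMTS.Tsucc, leftPMTS]

theorem leftPMTS_tsucc_s₁ : leftPMTS.Tsucc s₁ = {((), s₂)} := by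
  ext ⟨⟨⟩, s⟩; cases s <;> simp [PMTS.Tsucc, leftPMTS]

theorem leftPMTS_tsucc_s₂ : leftPMTS.Tsucc s₂ = ∅ := by
  ext ⟨⟨⟩, s⟩; cases s <;> simp [PMTS.Tsucc, leftPMTS]

theorem leftPMTS_tran_s₀ (μ : Set Unit) : leftPMTS.Tran μ s₀ = {{((), s₁)}} := by
  ext E
  simp only [PMTS.Tran, leftPMTS_tsucc_s₀, Set.mem_ofPred_eq]
  simp [leftPMTS, BForm.sat, Set.eq_singleton_iff_unique_mem, Set.subset_singleton_iff, and_comm]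

theorem leftPMTS_tran_univ_s₁ : leftPMTS.Tran Set.univ s₁ = {{((), s₂)}} := by
  ext E
  simp only [PMTS.Tran, leftPMTS_tsucc_s₁, Set.mem_ofPred_eq]
  simp [leftPMTS, BForm.sat, BForm.iff, Set.eq_singleton_iff_unique_mem, Set.subset_singleton_iff,
    and_comm]

theorem leftPMTS_tran_empty_s₁ : leftPMTS.Tran ∅ s₁ = {∅} := by
  ext E
  simp only [PMTS.Tran, leftPMTS_tsucc_s₁, Set.mem_ofPred_eq, Set.subset_singleton_iff_eq]
  simp [leftPMTS, BForm.sat, BForm.iff]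
  aesop

theorem leftPMTS_tran_s₂ (μ : Set Unit) : leftPMTS.Tran μ s₂ = {∅} := by
  ext E
  simp only [PMTS.Tran, leftPMTS_tsucc_s₂, Set.mem_ofPred_eq]
  simp [leftPMTS, BForm.sat]

theorem rightPMTS_tsucc_t₀ : rightPMTS.Tsucc t₀ = {((), t₁), ((), t₁')} := by
  ext ⟨⟨⟩, t⟩; cases t <;> simp [PMTS.Tsucc, rightPMTS]

theorem rightPMTS_tsucc_t₁ : rightPMTS.Tsucc t₁ = {((), t₂)} := by
  ext ⟨⟨⟩, t⟩; cases t <;> simp [PMTS.Tsucc, rightPMTS]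

theorem rightPMTS_tsucc_t₁' : rightPMTS.Tsucc t₁' = ∅ := by
  ext ⟨⟨⟩, t⟩; cases t <;> simp [PMTS.Tsucc, rightPMTS]

theorem rightPMTS_t₁_mem_tran_univ_t₀ : {((), t₁)} ∈ rightPMTS.Tran Set.univ t₀ :=
  ⟨by simp [rightPMTS_tsucc_t₀], by simp [rightPMTS, BForm.sat, BForm.iff]⟩

theorem rightPMTS_t₁'_mem_tran_empty_t₀ : {((), t₁')} ∈ rightPMTS.Tran ∅ t₀ :=
  ⟨by simp [rightPMTS_tsucc_t₀], by simp [rightPMTS, BForm.sat, BForm.iff]⟩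

theorem rightPMTS_t₂_mem_tran_t₁ (ν : Set Unit) : {((), t₂)} ∈ rightPMTS.Tran ν t₁ :=
  ⟨by simp [rightPMTS_tsucc_t₁], by simp [rightPMTS, BForm.sat]⟩

theorem rightPMTS_empty_notMem_tran_t₁ (ν : Set Unit) : ∅ ∉ rightPMTS.Tran ν t₁ := by
  simp [PMTS.Tran, rightPMTS, BForm.sat]

theorem rightPMTS_empty_mem_tran_t₁' (ν : Set Unit) : ∅ ∈ rightPMTS.Tran ν t₁' := by
  simp [PMTS.Tran, rightPMTS, BForm.sat]

theorem rightPMTS_empty_mem_tran_t₂ (ν : Set Unit) : ∅ ∈ rightPMTS.Tran ν t₂ := by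
  simp [PMTS.Tran, rightPMTS, BForm.sat]

theorem leftPMTS_pRefines_rightPMTS : PRefines leftPMTS rightPMTS s₀ t₀ := by
  rw [pRefines_iff]
  intro μ
  by_cases hμ : () ∈ μ
  · obtain rfl : μ = Set.univ := Set.eq_univ_of_forall fun _ => hμ
    refine ⟨Set.univ, _, ?_, refCond_graph (fun | s₀ => t₀ | s₁ => t₁ | s₂ => t₂) ?_⟩
    · rfl
    rintro (_ | _ | _) E hE
    · rw [leftPMTS_tran_s₀, Set.mem_singleton_iff] at hE
      subst hE
      simpa using rightPMTS_t₁_mem_tran_univ_t₀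
    · rw [leftPMTS_tran_univ_s₁, Set.mem_singleton_iff] at hE
      subst hE
      simpa using rightPMTS_t₂_mem_tran_t₁ _
    · rw [leftPMTS_tran_s₂, Set.mem_singleton_iff] at hE
      subst hE
      simpa using rightPMTS_empty_mem_tran_t₂ _
  · obtain rfl : μ = ∅ := Set.eq_empty_of_forall_notMem fun _ => hμ
    refine ⟨∅, _, ?_, refCond_graph (fun | s₀ => t₀ | s₁ => t₁' | s₂ => t₂) ?_⟩
    · rfl
    rintro (_ | _ | _) E hE
    · rw [leftPMTS_tran_s₀, Set.mem_singleton_iff] at hE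
      subst hE
      simpa using rightPMTS_t₁'_mem_tran_empty_t₀
    · rw [leftPMTS_tran_empty_s₁, Set.mem_singleton_iff] at hE
      subst hE
      simpa using rightPMTS_empty_mem_tran_t₁' _
    · rw [leftPMTS_tran_s₂, Set.mem_singleton_iff] at hE
      subst hE
      simpa using rightPMTS_empty_mem_tran_t₂ _

theorem not_exists_refCond_leftPMTS_rightPMTS :
    ¬ ∃ R, (s₀, t₀) ∈ R ∧ ∀ μ, ∃ ν, RefCond leftPMTS rightPMTS μ ν R := by
  rintro ⟨R, h₀, hR⟩
  obtain ⟨ν, hν⟩ := hR Set.univ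
  obtain ⟨t, ht, hs₁t⟩ :=
    hν.exists_tsucc (E := {((), s₁)}) h₀ (by simp [leftPMTS_tran_s₀]) (Set.mem_singleton _)
  simp only [rightPMTS_tsucc_t₀, Set.mem_insert_iff, Set.mem_singleton_iff, Prod.mk.injEq,
    true_and] at ht
  rcases ht with rfl | rfl
  · obtain ⟨ν', hν'⟩ := hR ∅
    exact rightPMTS_empty_notMem_tran_t₁ ν' <|
      hν'.empty_mem_tran hs₁t (by simp [leftPMTS_tran_empty_s₁])
  · obtain ⟨t', ht', -⟩ :=
      hν.exists_tsucc (E := {((), s₂)}) hs₁t (by simp [leftPMTS_tran_univ_s₁]) (Set.mem_singleton _)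
    simp [rightPMTS_tsucc_t₁'] at ht'

theorem valuationwise_not_fixed_relation :
    ∃ (A S1 S2 P1 P2 : Type) (M1 : PMTS A S1 P1) (M2 : PMTS A S2 P2)
      (s0 : S1) (t0 : S2),
      PRefines M1 M2 s0 t0 ∧
      ¬ ∃ R : Set (S1 × S2), (s0, t0) ∈ R ∧
          ∀ μ : Set P1, ∃ ν : Set P2, RefCond M1 M2 μ ν R :=
  ⟨_, _, _, _, _, leftPMTS, rightPMTS, s₀, t₀, leftPMTS_pRefines_rightPMTS,
    not_exists_refCond_leftPMTS_rightPMTS⟩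
end

section
/- For BMTS (PMTS with empty parameter set), the valuation-wise definition of modal refinement coincides with the fixed-relation definition, and on MTS (BMTS where each Φ(s) is a conjunction of positive transition literals) both coincide with the classical MTS modal refinement via may/must transitions. -/
/-!
Over an empty parameter set the only valuation is `∅`, and substituting parameter values changes
no admissible transition set, so `M^ν` and `M` have the same `Tran` and both definitions reduce to
BMTS modal refinement. For a BMTS arising from an MTS, the admissible sets of `s` are exactly the
sets between its must- and may-successors, and the very same relation `R` is then a BMTS
refinement relation iff it is a classical MTS refinement relation.
-/

theorem BForm.sat_map_paramSubst {X P : Type} (ν : Set P) (V : Set (X ⊕ Empty))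
    (φ : BForm (X ⊕ P)) :
    (φ.map (paramSubst ν)).sat V ↔ φ.sat (Sum.inl '' (Sum.inl ⁻¹' V) ∪ Sum.inr '' ν) := by
  induction φ with
  | tt => simp [BForm.map, BForm.sat]
  | var x =>
    rcases x with x | p
    · simp [BForm.map, BForm.sat, paramSubst]
    · by_cases hp : p ∈ ν <;> simp [BForm.map, BForm.sat, paramSubst, hp]
  | neg φ ih => simp only [BForm.map, BForm.sat, ih]
  | and φ ψ ihφ ihψ => simp only [BForm.map, BForm.sat, ihφ, ihψ]
  | or φ ψ ihφ ihψ => simp only [BForm.map, BForm.sat, ihφ, ihψ]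

theorem PMTS.tran_toBMTS_s5 {A S P : Type} (M : PMTS A S P) (ν : Set P) (s : S) :
    (M.toBMTS ν).Tran ∅ s = M.Tran ν s := by
  ext E
  simp [PMTS.Tran, PMTS.Tsucc, PMTS.toBMTS, BForm.sat_map_paramSubst,
    Set.preimage_image_eq E Sum.inl_injective]

theorem refCond_toBMTS_iff {A S1 S2 P1 P2 : Type} (M1 : PMTS A S1 P1) (M2 : PMTS A S2 P2)
    (μ : Set P1) (ν : Set P2) (R : Set (S1 × S2)) :
    RefCond (M1.toBMTS μ) (M2.toBMTS ν) ∅ ∅ R ↔ RefCond M1 M2 μ ν R := by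
  simp only [RefCond, PMTS.tran_toBMTS_s5]

theorem pRefines_iff_forall_exists_refCond {A S1 S2 P1 P2 : Type} (M1 : PMTS A S1 P1)
    (M2 : PMTS A S2 P2) (s : S1) (t : S2) :
    PRefines M1 M2 s t ↔ ∀ μ, ∃ ν, ∃ R, (s, t) ∈ R ∧ RefCond M1 M2 μ ν R := by
  simp only [PRefines, BRefines, IsRefRel, refCond_toBMTS_iff]

section BMTS

variable {A S1 S2 : Type} (M1 : BMTS A S1) (M2 : BMTS A S2) (s : S1) (t : S2)

theorem pRefines_iff_bRefines : PRefines M1 M2 s t ↔ BRefines M1 M2 s t := by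
  simp only [pRefines_iff_forall_exists_refCond, Set.eq_empty_of_isEmpty, forall_const,
    exists_const]
  rfl

theorem exists_forall_refCond_iff_bRefines :
    (∃ R, (s, t) ∈ R ∧ ∀ μ : Set Empty, ∃ ν : Set Empty, RefCond M1 M2 μ ν R) ↔
      BRefines M1 M2 s t := by
  simp only [Set.eq_empty_of_isEmpty, forall_const, exists_const]
  rfl

end BMTS

namespace MTS

variable {A S S1 S2 : Type}

def maySucc (N : MTS A S) (s : S) : Set (A × S) := {q | (s, q.1, q.2) ∈ N.may}

def mustSucc (N : MTS A S) (s : S) : Set (A × S) := {q | (s, q.1, q.2) ∈ N.must}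

theorem mustSucc_subset_maySucc (N : MTS A S) (s : S) : N.mustSucc s ⊆ N.maySucc s :=
  fun _ hq => N.must_sub hq

def IsRefRel (N1 : MTS A S1) (N2 : MTS A S2) (R : Set (S1 × S2)) : Prop :=
  ∀ p ∈ R,
    (∀ a s', (p.1, a, s') ∈ N1.may → ∃ t', (p.2, a, t') ∈ N2.may ∧ (s', t') ∈ R) ∧
    (∀ a t', (p.2, a, t') ∈ N2.must → ∃ s', (p.1, a, s') ∈ N1.must ∧ (s', t') ∈ R)

theorem mtsRefines_iff (N1 : MTS A S1) (N2 : MTS A S2) (s : S1) (t : S2) :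
    MTSRefines N1 N2 s t ↔ ∃ R, (s, t) ∈ R ∧ N1.IsRefRel N2 R :=
  Iff.rfl

end MTS

theorem Corresponds.mem_tran {A S : Type} {N : MTS A S} {M : BMTS A S} (h : Corresponds N M)
    (s : S) (E : Set (A × S)) :
    E ∈ M.Tran ∅ s ↔ N.mustSucc s ⊆ E ∧ E ⊆ N.maySucc s := by
  rw [h.2 s, PMTS.Tsucc, h.1]
  rfl

section Corresponds

variable {A S1 S2 : Type} {N1 : MTS A S1} {N2 : MTS A S2} {M1 : BMTS A S1} {M2 : BMTS A S2}
  {R : Set (S1 × S2)}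

/-- A may-transition `s →a s'` is matched by refining the admissible set `mustSucc s ∪ {(a, s')}`;
a must-transition of `t` is matched by refining the least admissible set `mustSucc s`. -/
theorem IsRefRel.mtsIsRefRel (h1 : Corresponds N1 M1) (h2 : Corresponds N2 M2)
    (hR : IsRefRel M1 M2 R) : N1.IsRefRel N2 R := by
  intro p hp
  constructor
  · intro a s' hmay
    have hMs : N1.mustSucc p.1 ∪ {(a, s')} ∈ M1.Tran ∅ p.1 :=
      (h1.mem_tran _ _).2 ⟨Set.subset_union_left,
        Set.union_subset (N1.mustSucc_subset_maySucc _) (Set.singleton_subset_iff.2 hmay)⟩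
    obtain ⟨N, hN, hfwd, -⟩ := hR p hp _ hMs
    obtain ⟨t', ht'N, ht'R⟩ := hfwd (a, s') (Or.inr rfl)
    exact ⟨t', ((h2.mem_tran _ _).1 hN).2 ht'N, ht'R⟩
  · intro a t' hmust
    have hMs : N1.mustSucc p.1 ∈ M1.Tran ∅ p.1 :=
      (h1.mem_tran _ _).2 ⟨subset_rfl, N1.mustSucc_subset_maySucc _⟩
    obtain ⟨N, hN, -, hbwd⟩ := hR p hp _ hMs
    exact hbwd (a, t') (((h2.mem_tran _ _).1 hN).1 hmust)

/-- An admissible set `Ms` of `s` is matched by the must-successors of `t` together with the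
may-successors of `t` that match some transition in `Ms`. -/
theorem MTS.IsRefRel.isRefRel (h1 : Corresponds N1 M1) (h2 : Corresponds N2 M2)
    (hR : N1.IsRefRel N2 R) : _root_.IsRefRel M1 M2 R := by
  intro p hp Ms hMs
  obtain ⟨hmustMs, hMsmay⟩ := (h1.mem_tran _ _).1 hMs
  refine ⟨N2.mustSucc p.2 ∪
    {r | r ∈ N2.maySucc p.2 ∧ ∃ s', (r.1, s') ∈ Ms ∧ (s', r.2) ∈ R}, ?_, ?_, ?_⟩
  · exact (h2.mem_tran _ _).2 ⟨Set.subset_union_left,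
      Set.union_subset (N2.mustSucc_subset_maySucc _) fun r hr => hr.1⟩
  · rintro ⟨a, s'⟩ hq
    obtain ⟨t', ht'may, ht'R⟩ := (hR p hp).1 a s' (hMsmay hq)
    exact ⟨t', Or.inr ⟨ht'may, s', hq, ht'R⟩, ht'R⟩
  · rintro ⟨a, t'⟩ (hmust | ⟨-, hmatch⟩)
    · obtain ⟨s', hs'must, hs'R⟩ := (hR p hp).2 a t' hmust
      exact ⟨s', hmustMs hs'must, hs'R⟩
    · exact hmatch

theorem bRefines_iff_mtsRefines (h1 : Corresponds N1 M1) (h2 : Corresponds N2 M2)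
    (s : S1) (t : S2) : BRefines M1 M2 s t ↔ MTSRefines N1 N2 s t := by
  rw [MTS.mtsRefines_iff]
  exact exists_congr fun R => and_congr_right fun _ =>
    ⟨IsRefRel.mtsIsRefRel h1 h2, MTS.IsRefRel.isRefRel h1 h2⟩

end Corresponds

theorem bmts_definitions_coincide_and_mts_classical :
    (∀ (A S1 S2 : Type) (M1 : BMTS A S1) (M2 : BMTS A S2) (s0 : S1) (t0 : S2),
      PRefines M1 M2 s0 t0 ↔
        ∃ R : Set (S1 × S2), (s0, t0) ∈ R ∧
          ∀ μ : Set Empty, ∃ ν : Set Empty, RefCond M1 M2 μ ν R) ∧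
    (∀ (A S1 S2 : Type) (N1 : MTS A S1) (N2 : MTS A S2)
      (M1 : BMTS A S1) (M2 : BMTS A S2),
      Corresponds N1 M1 → Corresponds N2 M2 → ∀ (s0 : S1) (t0 : S2),
        (PRefines M1 M2 s0 t0 ↔ MTSRefines N1 N2 s0 t0) ∧
        ((∃ R : Set (S1 × S2), (s0, t0) ∈ R ∧
            ∀ μ : Set Empty, ∃ ν : Set Empty, RefCond M1 M2 μ ν R) ↔
          MTSRefines N1 N2 s0 t0)) := by
  refine ⟨fun A S1 S2 M1 M2 s0 t0 => (pRefines_iff_bRefines M1 M2 s0 t0).trans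
    (exists_forall_refCond_iff_bRefines M1 M2 s0 t0).symm, ?_⟩
  intro A S1 S2 N1 N2 M1 M2 h1 h2 s0 t0
  have hclassical := bRefines_iff_mtsRefines h1 h2 s0 t0
  exact ⟨(pRefines_iff_bRefines M1 M2 s0 t0).trans hclassical,
    (exists_forall_refCond_iff_bRefines M1 M2 s0 t0).trans hclassical⟩
end

section
/- De-negation correctness: for a state s₀ of a BMTS, the set of implementations satisfies ⟦s₀⟧ = ⋃_{M ∈ Tran(s₀)} ⟦M⟧, where each M ∈ Tran(s₀) is regarded as a state of the de-negation DMTS. -/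
/-! A state `E` of `M^D` is an admissible transition set of `M`, and its obligation asks that
every `(a, s') ∈ E` be answered by an `a`-transition into some admissible set of `s'`.
An implementation has a single admissible transition set per state, so a refinement `R` of `M`
lets us pick one admissible set `N (j, t)` for each related pair, matching the transitions of `j`;
relating `j` to `N (j, t)` is then a refinement of `M^D`. Conversely, a refinement of `M^D` gives
one of `M` by replacing each admissible set by the state it is admissible for. -/

namespace BForm

variable {X Y : Type}

theorem sat_foldr_and (l : List X) (g : X → BForm Y) (ν : Set Y) :
    sat ν (l.foldr (fun x acc => .and (g x) acc) .tt) ↔ ∀ x ∈ l, sat ν (g x) := by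
  induction l with
  | nil => simp [sat]
  | cons a l ih => simp [sat, ih]

theorem sat_foldr_or_var (l : List X) (f : X → Y) (ν : Set Y) :
    sat ν (l.foldr (fun x acc => .or (.var (f x)) acc) (.neg .tt)) ↔ ∃ x ∈ l, f x ∈ ν := by
  induction l with
  | nil => simp [sat]
  | cons a l ih => simp [sat, ih]

end BForm

def TranMatch {A S1 S2 : Type} (R : Set (S1 × S2)) (E : Set (A × S1)) (F : Set (A × S2)) :
    Prop :=
  (∀ q ∈ E, ∃ t', (q.1, t') ∈ F ∧ (q.2, t') ∈ R) ∧ (∀ q ∈ F, ∃ s', (q.1, s') ∈ E ∧ (s', q.2) ∈ R)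

namespace PMTS

theorem IsImplementation.mem_Tran_iff {A S : Type} {I : BMTS A S} (hI : I.IsImplementation)
    {j : S} {E : Set (A × S)} : E ∈ I.Tran ∅ j ↔ E = I.Tsucc j := by
  rw [hI j]
  rfl

section deNeg

variable {A S : Type} [Fintype A] [Fintype S] (M : BMTS A S)

theorem mem_deNeg_Tsucc {E : Set (A × S)} {a : A} {E' : Set (A × S)} :
    (a, E') ∈ M.deNeg.Tsucc E ↔ ∃ s', (a, s') ∈ E ∧ E' ∈ M.Tran ∅ s' :=
  Iff.rfl

theorem mem_deNeg_Tran {E : Set (A × S)} {N : Set (A × Set (A × S))} :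
    N ∈ M.deNeg.Tran ∅ E ↔
      N ⊆ M.deNeg.Tsucc E ∧ ∀ q ∈ E, ∃ E' ∈ M.Tran ∅ q.2, (q.1, E') ∈ N := by
  refine and_congr_right fun _ => ?_
  simp only [deNeg, BForm.sat_foldr_and, BForm.sat_foldr_or_var, Finset.mem_toList,
    Set.Finite.mem_toFinset, Set.image_empty, Set.union_empty, Sum.inl_injective.mem_set_image]

variable {SI : Type} {I : BMTS A SI}

theorem isRefRel_deNeg_of_choice (hI : I.IsImplementation) {R : Set (SI × S)}
    {N : SI × S → Set (A × S)}
    (hN : ∀ p ∈ R, N p ∈ M.Tran ∅ p.2 ∧ TranMatch R (I.Tsucc p.1) (N p)) :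
    IsRefRel I M.deNeg {q | ∃ t, (q.1, t) ∈ R ∧ q.2 = N (q.1, t)} := by
  rintro ⟨j, F⟩ ⟨t, hjt, hF⟩ E hE
  dsimp only at hjt hF
  rw [hI.mem_Tran_iff] at hE
  subst hF hE
  obtain ⟨-, hjN, hNj⟩ := hN (j, t) hjt
  -- each transition `(a, t')` of `N (j, t)` is answered in `M^D` by `(a, N (j', t'))`,
  -- where `j'` is an `a`-successor of `j` related to `t'`
  refine ⟨{q | ∃ j' t', (q.1, t') ∈ N (j, t) ∧ (j', t') ∈ R ∧ (q.1, j') ∈ I.Tsucc j ∧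
      q.2 = N (j', t')}, ?_, ?_, ?_⟩
  · rw [mem_deNeg_Tran]
    constructor
    · rintro ⟨a, _⟩ ⟨j', t', hat', hj't', -, rfl⟩
      exact M.mem_deNeg_Tsucc.mpr ⟨t', hat', (hN (j', t') hj't').1⟩
    · rintro ⟨a, t'⟩ hat'
      obtain ⟨j', haj', hj't'⟩ := hNj (a, t') hat'
      exact ⟨N (j', t'), (hN (j', t') hj't').1, j', t', hat', hj't', haj', rfl⟩
  · rintro ⟨a, j'⟩ haj'
    obtain ⟨t', hat', hj't'⟩ := hjN (a, j') haj'
    exact ⟨N (j', t'), ⟨j', t', hat', hj't', haj', rfl⟩, t', hj't', rfl⟩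
  · rintro ⟨a, _⟩ ⟨j', t', -, hj't', haj', rfl⟩
    exact ⟨j', haj', t', hj't', rfl⟩

theorem brefines_deNeg_of_brefines (hI : I.IsImplementation) {i : SI} {s : S}
    (h : BRefines I M i s) : ∃ E ∈ M.Tran ∅ s, BRefines I M.deNeg i E := by
  obtain ⟨R, hiR, hR⟩ := h
  have hchoice : ∀ p ∈ R, ∃ F, F ∈ M.Tran ∅ p.2 ∧ TranMatch R (I.Tsucc p.1) F := fun p hp =>
    hR p hp _ (hI.mem_Tran_iff.mpr rfl)
  choose! N hN using hchoice
  exact ⟨N (i, s), (hN _ hiR).1, {q | ∃ t, (q.1, t) ∈ R ∧ q.2 = N (q.1, t)}, ⟨s, hiR, rfl⟩,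
    M.isRefRel_deNeg_of_choice hI hN⟩

theorem brefines_of_brefines_deNeg {i : SI} {s : S} {E : Set (A × S)} (hE : E ∈ M.Tran ∅ s)
    (h : BRefines I M.deNeg i E) : BRefines I M i s := by
  obtain ⟨R, hiR, hR⟩ := h
  refine ⟨{p | ∃ F ∈ M.Tran ∅ p.2, (p.1, F) ∈ R}, ⟨E, hE, hiR⟩, ?_⟩
  rintro ⟨j, t⟩ ⟨F, hF, hjF⟩ Ms hMs
  obtain ⟨N, hN, hMsN, hNMs⟩ := hR (j, F) hjF Ms hMs
  obtain ⟨hNsucc, hFN⟩ := M.mem_deNeg_Tran.mp hN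
  refine ⟨F, hF, fun q hq => ?_, fun q hq => ?_⟩
  · obtain ⟨F', hF'N, hF'R⟩ := hMsN q hq
    obtain ⟨t', hqt', hF'⟩ := M.mem_deNeg_Tsucc.mp (hNsucc hF'N)
    exact ⟨t', hqt', F', hF', hF'R⟩
  · obtain ⟨F', hF', hF'N⟩ := hFN q hq
    obtain ⟨j', hj', hj'F'⟩ := hNMs (q.1, F') hF'N
    exact ⟨j', hj', F', hF', hj'F'⟩

end deNeg

end PMTS

theorem deNeg_correct {A S : Type} [Fintype A] [Fintype S] (M : BMTS A S) (s0 : S)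
    (SI : Type) (I : BMTS A SI) (i : SI) (hI : I.IsImplementation) :
    BRefines I M i s0 ↔ ∃ E ∈ M.Tran ∅ s0, BRefines I M.deNeg i E :=
  ⟨M.brefines_deNeg_of_brefines hI, fun ⟨_, hE, h⟩ => M.brefines_of_brefines_deNeg hE h⟩
end

section
/- If a state s of a globally consistent BMTS and any admissible transition set M ∈ Tran(s) are given, then there exists an implementation I with I ≤ₘ s whose initial state has exactly the transitions in M (i.e., T_I(s_I) = M). -/
/-!
Global consistency makes every `Tran t` nonempty. Choosing `E` at `s` and any admissible set
elsewhere, and letting each state take exactly its chosen (finite) set of transitions, described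
by the conjunction of those transitions, yields an implementation on the state space of `M`.
Each chosen set is admissible in `M`, so the diagonal is a modal refinement relation.
-/

noncomputable def BForm.allOf {X : Type} (s : Finset X) : BForm X :=
  s.toList.foldr (fun x φ => .and (.var x) φ) .tt

theorem BForm.sat_allOf {X : Type} (ν : Set X) (s : Finset X) :
    (BForm.allOf s).sat ν ↔ ↑s ⊆ ν := by
  suffices h : ∀ l : List X,
      (l.foldr (fun x φ => BForm.and (.var x) φ) .tt).sat ν ↔ ∀ x ∈ l, x ∈ ν by
    simpa [BForm.allOf, Set.subset_def] using h s.toList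
  intro l
  induction l with
  | nil => simp [BForm.sat]
  | cons x l ih => simp [BForm.sat, ih]

theorem PMTS.tran_nonempty_of_semConsistent {A S : Type} {M : BMTS A S}
    (hM : M.SemConsistent) (t : S) : (M.Tran ∅ t).Nonempty := by
  obtain ⟨SI, I, i, hImpl, R, hiR, hRef⟩ := hM t
  have hTsucc : I.Tsucc i ∈ I.Tran ∅ i := by rw [hImpl i]; rfl
  obtain ⟨N, hN, -⟩ := hRef (i, t) hiR (I.Tsucc i) hTsucc
  exact ⟨N, hN⟩

noncomputable def PMTS.ofSucc {A S : Type} (F : S → Finset (A × S)) : BMTS A S where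
  T := {x | (x.2.1, x.2.2) ∈ F x.1}
  Φ := fun t => BForm.allOf ((F t).map .inl)

theorem PMTS.tsucc_ofSucc {A S : Type} (F : S → Finset (A × S)) (t : S) :
    (PMTS.ofSucc F).Tsucc t = F t := rfl

theorem PMTS.isImplementation_ofSucc {A S : Type} (F : S → Finset (A × S)) :
    (PMTS.ofSucc F).IsImplementation := by
  intro t
  ext E
  simp only [PMTS.Tran, PMTS.ofSucc, BForm.sat_allOf, Set.image_empty, Set.union_empty,
    Finset.coe_map, Function.Embedding.inl_apply, Set.image_subset_image_iff Sum.inl_injective,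
    Set.mem_singleton_iff, Set.mem_ofPred_eq]
  exact ⟨fun ⟨hsub, hsup⟩ => hsub.antisymm hsup, fun h => ⟨h.le, h.ge⟩⟩

theorem PMTS.isRefRel_diagonal {A S : Type} {I M : BMTS A S} (hI : I.IsImplementation)
    (hTran : ∀ t, I.Tsucc t ∈ M.Tran ∅ t) : IsRefRel I M (Set.diagonal S) := by
  rintro ⟨t, t'⟩ (rfl : t = t') Ms hMs
  rw [hI t, Set.mem_singleton_iff] at hMs
  subst hMs
  exact ⟨I.Tsucc t, hTran t, fun q hq => ⟨q.2, hq, rfl⟩, fun q hq => ⟨q.2, hq, rfl⟩⟩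

theorem implementation_with_prescribed_transitions {A S : Type} [Finite A] [Finite S]
    (M : BMTS A S) (hM : M.SemConsistent) (s : S)
    (E : Set (A × S)) (hE : E ∈ M.Tran ∅ s) :
    ∃ I : BMTS A S, I.IsImplementation ∧ I.Tsucc s = E ∧ BRefines I M s s := by
  classical
  set G : S → Set (A × S) :=
    Function.update (fun t => (M.tran_nonempty_of_semConsistent hM t).some) s E
  have hG : ∀ t, G t ∈ M.Tran ∅ t := by
    intro t
    rcases eq_or_ne t s with rfl | ht
    · simpa [G] using hE
    · simpa [G, ht] using (M.tran_nonempty_of_semConsistent hM t).some_mem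
  let I := PMTS.ofSucc fun t => (G t).toFinite.toFinset
  have hI : ∀ t, I.Tsucc t = G t := fun t => by simp [I, PMTS.tsucc_ofSucc]
  refine ⟨I, PMTS.isImplementation_ofSucc _, by simp [hI, G], Set.diagonal S, rfl, ?_⟩
  exact PMTS.isRefRel_diagonal (PMTS.isImplementation_ofSucc _) fun t => hI t ▸ hG t
end
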